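/- arXiv:2402.15058 — 4 statements merged into one kernel-verified Lean document; each statement's English description precedes it below -/
import Mathlib

section
/- Let ι : L ↪ K be an inclusion of filtered chain complexes (over ℤ/2) with L_i a subcomplex of K_i for each i. Then for all indices i ≤ j, the image of the map induced on degree-k homology from index i to index j of the image persistence module im(H_k(ι)) is isomorphic to Z_k(L_i) / (B_k(K_j) ∩ Z_k(L_i)). -/
/-
STATEMENT 3 setup.  We work at the level of `ℤ/2`-chains: all chain groups of
the filtered complexes are realized as submodules of one ambient module `C`
(the degree-`k` chains of the final complex).  For each filtration index `i`:
`ZL i` = `Z_k(L_i)` (cycles of `L_i`), `BL i` = `B_k(L_i)` (boundaries of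
`L_i`), and similarly `ZK i`, `BK i` for `K_i`.  Homology is the quotient
`H = Z / (B ∩ Z)`, and the maps induced by inclusions are the induced maps on
quotients.
-/

/-- Homology `Z/B` presented as a quotient of the cycle submodule. -/
abbrev homology {C : Type*} [AddCommGroup C] [Module (ZMod 2) C]
    (Z B : Submodule (ZMod 2) C) :=
  Z ⧸ (B.comap Z.subtype)

/-- The map on homology induced by inclusions of cycles and boundaries. -/
noncomputable def inducedHom {C : Type*} [AddCommGroup C] [Module (ZMod 2) C]
    {Z B Z' B' : Submodule (ZMod 2) C} (hZ : Z ≤ Z') (hB : B ≤ B') :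
    homology Z B →ₗ[ZMod 2] homology Z' B' :=
  Submodule.mapQ _ _ (Submodule.inclusion hZ)
    (by intro x hx; exact hB hx)

/-- for an inclusion `ι : L ↪ K` of filtered chain complexes over
`ℤ/2` and all indices `i ≤ j`, the image of the structure map from index `i`
to index `j` of the image persistence module `im(H_k(ι))` is isomorphic to
`Z_k(L_i) / (B_k(K_j) ∩ Z_k(L_i))`.  Here the structure map of `im(H_k(ι))`
from `i` to `j` has the same image as the composite
`H_k(L_i) → H_k(K_i) → H_k(K_j)`. -/
theorem image_persistence_vector_space
    {C : Type*} [AddCommGroup C] [Module (ZMod 2) C]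
    (ZL BL ZK BK : ℕ → Submodule (ZMod 2) C)
    (hZLmono : Monotone ZL) (hBLmono : Monotone BL)
    (hZKmono : Monotone ZK) (hBKmono : Monotone BK)
    (hBL : ∀ i, BL i ≤ ZL i) (hBK : ∀ i, BK i ≤ ZK i)
    (hZ : ∀ i, ZL i ≤ ZK i) (hB : ∀ i, BL i ≤ BK i)
    (i j : ℕ) (hij : i ≤ j) :
    Nonempty
      ((LinearMap.range
          ((inducedHom (hZKmono hij) (hBKmono hij)).comp
            (inducedHom (hZ i) (hB i)))) ≃ₗ[ZMod 2]
        (ZL i ⧸ ((BK j ⊓ ZL i).comap (ZL i).subtype))) := by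
  classical
  have h1 : ZL i ≤ ZK j := le_trans (hZ i) (hZKmono hij)
  let g : ZL i →ₗ[ZMod 2] homology (ZK j) (BK j) :=
    (Submodule.mkQ _).comp (Submodule.inclusion h1)
  have hker : LinearMap.ker g = (BK j ⊓ ZL i).comap (ZL i).subtype := by
    ext x
    simp only [g, LinearMap.mem_ker, LinearMap.comp_apply, Submodule.mkQ_apply,
      Submodule.Quotient.mk_eq_zero, Submodule.mem_comap, Submodule.mem_inf,
      Submodule.subtype_apply, Submodule.inclusion]
    exact ⟨fun h => ⟨h, x.2⟩, fun h => h.1⟩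
  have hcomp : ∀ x : ZL i,
      ((inducedHom (hZKmono hij) (hBKmono hij)).comp
        (inducedHom (hZ i) (hB i))) (Submodule.Quotient.mk x) = g x := by
    intro x
    rfl
  have hrange : LinearMap.range
      ((inducedHom (hZKmono hij) (hBKmono hij)).comp
        (inducedHom (hZ i) (hB i))) = LinearMap.range g := by
    ext y
    constructor
    · rintro ⟨z, rfl⟩
      obtain ⟨x, rfl⟩ := Submodule.Quotient.mk_surjective _ z
      exact ⟨x, (hcomp x).symm⟩
    · rintro ⟨x, rfl⟩
      exact ⟨Submodule.Quotient.mk x, hcomp x⟩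
  have e1 : (LinearMap.range
      ((inducedHom (hZKmono hij) (hBKmono hij)).comp
        (inducedHom (hZ i) (hB i)))) ≃ₗ[ZMod 2] LinearMap.range g :=
    LinearEquiv.ofEq _ _ hrange
  have e2 : (ZL i ⧸ LinearMap.ker g) ≃ₗ[ZMod 2] LinearMap.range g :=
    g.quotKerEquivRange
  have e3 : (ZL i ⧸ LinearMap.ker g) ≃ₗ[ZMod 2]
      (ZL i ⧸ ((BK j ⊓ ZL i).comap (ZL i).subtype)) :=
    Submodule.quotEquivOfEq _ _ hker
  exact ⟨e1.trans (e2.symm.trans e3)⟩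
end

section
/- The pivots of the nonzero columns of a reduced matrix are independent of the reduction: if R = D·V and R' = D·V' where V, V' are invertible upper-triangular matrices over ℤ/2 and both R and R' have pairwise distinct pivots among nonzero columns, then for every column index j, column j of R is zero iff column j of R' is zero, and when nonzero their pivots agree. -/
/-- The pivot of a column `j` of a matrix over `ℤ/2`: the largest row index of
a nonzero entry (`⊥` if the column is zero). -/
def pivot {m n : ℕ} (R : Matrix (Fin m) (Fin n) (ZMod 2)) (j : Fin n) :
    WithBot (Fin m) :=
  (Finset.univ.filter (fun i => R i j ≠ 0)).max

/-- A matrix is reduced if no two nonzero columns share the same pivot. -/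
def Reduced {m n : ℕ} (R : Matrix (Fin m) (Fin n) (ZMod 2)) : Prop :=
  ∀ k j : Fin n, k ≠ j → (fun i => R i k) ≠ 0 → (fun i => R i j) ≠ 0 →
    pivot R k ≠ pivot R j

lemma pivot_eq_bot_iff {m n : ℕ} (R : Matrix (Fin m) (Fin n) (ZMod 2)) (j : Fin n) :
    pivot R j = ⊥ ↔ (fun i => R i j) = 0 := by
  rw [pivot, Finset.max_eq_bot, Finset.filter_eq_empty_iff]
  constructor
  · intro h; funext i; simpa using h (Finset.mem_univ i)
  · intro h i _; simpa using congrFun h i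

lemma zero_of_pivot_lt {m n : ℕ} {R : Matrix (Fin m) (Fin n) (ZMod 2)} {j : Fin n}
    {i : Fin m} (h : pivot R j < (i : WithBot (Fin m))) : R i j = 0 := by
  by_contra h0
  exact absurd h (not_lt.mpr (Finset.le_max (by simp [h0])))

lemma ne_zero_of_pivot_eq {m n : ℕ} {R : Matrix (Fin m) (Fin n) (ZMod 2)} {j : Fin n}
    {p : Fin m} (h : pivot R j = (p : WithBot (Fin m))) : R p j ≠ 0 := by
  have := Finset.mem_of_max h
  simpa using this

lemma col_ne_zero_of_pivot_eq {m n : ℕ} {R : Matrix (Fin m) (Fin n) (ZMod 2)} {j : Fin n}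
    {p : Fin m} (h : pivot R j = (p : WithBot (Fin m))) : (fun i => R i j) ≠ 0 := by
  intro h0
  exact ne_zero_of_pivot_eq h (congrFun h0 p)

/-- Pivot of a sum of columns of a reduced matrix is the sup of the pivots. -/
lemma pivot_sum {m n : ℕ} {R : Matrix (Fin m) (Fin n) (ZMod 2)} (hred : Reduced R)
    (S : Finset (Fin n)) (c : Fin m → ZMod 2) (hc : ∀ i, c i = ∑ k ∈ S, R i k) :
    (Finset.univ.filter (fun i => c i ≠ 0)).max = S.sup (fun k => pivot R k) := by
  set σ := S.sup (fun k => pivot R k) with hσ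
  -- upper bound
  have hub : ∀ i : Fin m, σ < (i : WithBot (Fin m)) → c i = 0 := by
    intro i hi
    rw [hc]
    refine Finset.sum_eq_zero (fun k hk => ?_)
    exact zero_of_pivot_lt (lt_of_le_of_lt (Finset.le_sup (f := fun k => pivot R k) hk) hi)
  rcases eq_or_ne σ ⊥ with h0 | h0
  · rw [h0, Finset.max_eq_bot, Finset.filter_eq_empty_iff]
    intro i _
    simp only [ne_eq, not_not]
    exact hub i (h0 ▸ (by exact_mod_cast WithBot.bot_lt_coe i))
  · obtain ⟨p, hp⟩ := WithBot.ne_bot_iff_exists.mp h0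
    have hSne : S.Nonempty := by
      by_contra h
      rw [Finset.not_nonempty_iff_eq_empty] at h
      rw [h] at hσ; simp at hσ; exact h0 hσ
    obtain ⟨k0, hk0S, hk0⟩ := Finset.exists_mem_eq_sup S hSne (fun k => pivot R k)
    have hpk0 : pivot R k0 = (p : WithBot (Fin m)) := by rw [← hk0, ← hσ, ← hp]
    -- uniqueness of k0 among S with pivot = p
    have huniq : ∀ k ∈ S, k ≠ k0 → pivot R k < (p : WithBot (Fin m)) := by
      intro k hkS hkne
      have hle : pivot R k ≤ (p : WithBot (Fin m)) := by
        rw [hp]; exact Finset.le_sup (f := fun k => pivot R k) hkS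
      rcases lt_or_eq_of_le hle with h | h
      · exact h
      · exact absurd (h.trans hpk0.symm)
          (hred k k0 hkne (col_ne_zero_of_pivot_eq h) (col_ne_zero_of_pivot_eq hpk0))
    have hcp : c p ≠ 0 := by
      rw [hc, Finset.sum_eq_single_of_mem k0 hk0S
        (fun k hkS hkne => zero_of_pivot_lt (huniq k hkS hkne))]
      exact ne_zero_of_pivot_eq hpk0
    -- conclude max = σ = p
    rw [← hp]
    apply le_antisymm
    · apply Finset.max_le
      intro q hq
      by_contra hlt
      push_neg at hlt
      have hcq : c q ≠ 0 := by simpa using hq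
      exact hcq (hub q (hp ▸ hlt))
    · exact Finset.le_max (by simp [hcp])

/-- pairing uniqueness lemma: if `R = D·V` and `R' = D·V'` with
`V, V'` invertible upper-triangular matrices over `ℤ/2` and both `R` and `R'`
are reduced, then for every column index `j`, column `j` of `R` is zero iff
column `j` of `R'` is zero, and when nonzero the pivots agree (pivots are
elements of `WithBot (Fin m)`, with `⊥` for zero columns, so the two claims
amount to `pivot R j = pivot R' j` together with the zero-column iff). -/
theorem pivots_independent_of_reduction {m n : ℕ}
    (D R R' : Matrix (Fin m) (Fin n) (ZMod 2))
    (V V' : Matrix (Fin n) (Fin n) (ZMod 2))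
    (hV : IsUnit V) (hV' : IsUnit V')
    (hVt : V.BlockTriangular id) (hV't : V'.BlockTriangular id)
    (hR : R = D * V) (hR' : R' = D * V')
    (hred : Reduced R) (hred' : Reduced R') :
    ∀ j : Fin n, ((fun i => R i j) = 0 ↔ (fun i => R' i j) = 0) ∧
      pivot R j = pivot R' j := by
  haveI := hV.invertible
  -- W = V⁻¹ * V'
  set W : Matrix (Fin n) (Fin n) (ZMod 2) := V⁻¹ * V' with hWdef
  have hWt : W.BlockTriangular id :=
    (Matrix.blockTriangular_inv_of_blockTriangular hVt).mul hV't
  have hRW : R' = R * W := by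
    rw [hR, hR', hWdef, Matrix.mul_assoc, ← Matrix.mul_assoc V,
      Matrix.mul_nonsing_inv V ((Matrix.isUnit_iff_isUnit_det V).mp hV), Matrix.one_mul]
  have hWu : IsUnit W := (Matrix.isUnit_nonsing_inv_iff.mpr hV).mul hV'
  have hWdet : W.det ≠ 0 := ((Matrix.isUnit_iff_isUnit_det W).mp hWu).ne_zero
  have hdiag : ∀ j : Fin n, W j j ≠ 0 := by
    intro j hj
    apply hWdet
    rw [Matrix.det_of_upperTriangular hWt]
    exact Finset.prod_eq_zero (Finset.mem_univ j) hj
  -- column formula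
  have hcol : ∀ j : Fin n, ∀ i : Fin m,
      R' i j = ∑ k ∈ Finset.univ.filter (fun k => W k j ≠ 0), R i k := by
    intro j i
    rw [hRW, Matrix.mul_apply]
    rw [← Finset.sum_filter_ne_zero]
    have h1 : ∀ a : ZMod 2, a ≠ 0 → a = 1 := by decide
    calc ∑ k ∈ Finset.univ.filter (fun k => R i k * W k j ≠ 0), R i k * W k j
        = ∑ k ∈ Finset.univ.filter (fun k => W k j ≠ 0), R i k * W k j := by
          apply Finset.sum_subset
          · intro k hk
            simp only [Finset.mem_filter, Finset.mem_univ, true_and] at hk ⊢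
            exact fun h => hk (by rw [h, mul_zero])
          · intro k _ hk
            simp only [Finset.mem_filter, Finset.mem_univ, true_and, not_not] at hk
            exact hk
      _ = ∑ k ∈ Finset.univ.filter (fun k => W k j ≠ 0), R i k := by
          refine Finset.sum_congr rfl (fun k hk => ?_)
          simp only [Finset.mem_filter, Finset.mem_univ, true_and] at hk
          rw [h1 _ hk, mul_one]
  have hmainN : ∀ N : ℕ, ∀ j : Fin n, j.val < N → pivot R j = pivot R' j := by
    intro N
    induction N with
    | zero => exact fun j hj => absurd hj (Nat.not_lt_zero _)
    | succ N ihN =>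
      intro j hjN
      have ih : ∀ k : Fin n, k < j → pivot R k = pivot R' k := fun k hk =>
        ihN k (Nat.lt_of_lt_of_le hk (Nat.lt_succ_iff.mp hjN))
      set S := Finset.univ.filter (fun k => W k j ≠ 0) with hS
      have hjS : j ∈ S := by simp [hS, hdiag j]
      have hkle : ∀ k ∈ S, k ≤ j := by
        intro k hk
        simp only [hS, Finset.mem_filter, Finset.mem_univ, true_and] at hk
        by_contra h
        exact hk (hWt (by simpa using lt_of_not_ge h))
      have hpiv : pivot R' j = S.sup (fun k => pivot R k) :=
        pivot_sum hred S (fun i => R' i j) (hcol j)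
      have hle : pivot R j ≤ pivot R' j := by
        rw [hpiv]; exact Finset.le_sup (f := fun k => pivot R k) hjS
      rcases eq_or_lt_of_le hle with h | h
      · exact h
      · exfalso
        -- sup is attained at some k0 ≠ j with pivot R k0 > pivot R j
        have hSne : S.Nonempty := ⟨j, hjS⟩
        obtain ⟨k0, hk0S, hk0⟩ := Finset.exists_mem_eq_sup S hSne (fun k => pivot R k)
        have hk0p : pivot R' j = pivot R k0 := by rw [hpiv, hk0]
        have hk0ne : k0 ≠ j := by
          intro he; rw [he] at hk0p; exact absurd hk0p.symm (ne_of_lt h)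
        have hk0lt : (k0 : Fin n) < j := lt_of_le_of_ne (hkle k0 hk0S) hk0ne
        have hk0bot : pivot R k0 ≠ ⊥ := by
          intro hb
          rw [hk0p, hb] at h
          exact absurd h (by simp)
        obtain ⟨p, hp⟩ := WithBot.ne_bot_iff_exists.mp hk0bot
        have hihk0 : pivot R k0 = pivot R' k0 := ih k0 hk0lt
        exact hred' k0 j hk0ne
          (col_ne_zero_of_pivot_eq (R := R') (hihk0 ▸ hp.symm))
          (col_ne_zero_of_pivot_eq (R := R') (hk0p ▸ hp.symm))
          (by rw [← hihk0, ← hk0p])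
  have hmain : ∀ j : Fin n, pivot R j = pivot R' j := fun j =>
    hmainN (j.val + 1) j (Nat.lt_succ_self _)
  intro j
  refine ⟨?_, hmain j⟩
  rw [← pivot_eq_bot_iff, ← pivot_eq_bot_iff, hmain j]
end

section
/- For a matrix D over ℤ/2 with columns indexed 1..n, the pivot function of any reduction R = D·V (V invertible upper-triangular, R reduced) satisfies: pivot(R[j]) = i if and only if rank(D_i^j) − rank(D_{i+1}^j) − rank(D_i^{j−1}) + rank(D_{i+1}^{j−1}) = 1, where D_a^b denotes the lower-left submatrix of D consisting of rows ≥ a and columns ≤ b. -/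
/-- The lower-left submatrix of `D` consisting of the rows with (0-based)
index `≥ a` and the columns with index `< b`. -/
def lowerLeft {m n : ℕ} (D : Matrix (Fin m) (Fin n) (ZMod 2)) (a b : ℕ) :
    Matrix {i : Fin m // a ≤ i.1} {j : Fin n // j.1 < b} (ZMod 2) :=
  fun i j => D i.1 j.1

noncomputable def rLL {m n : ℕ} (D : Matrix (Fin m) (Fin n) (ZMod 2))
    (a b : ℕ) : ℕ :=
  (lowerLeft D a b).rank

open Finset

theorem linearIndependent_of_injective_lastNonzero {K σ ι : Type*} [Ring K] [NoZeroDivisors K]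
    [LinearOrder σ] {v : ι → σ → K} (p : ι → σ) (hp : Function.Injective p)
    (hne : ∀ k, v k (p k) ≠ 0) (hzero : ∀ k i, p k < i → v k i = 0) :
    LinearIndependent K v := by
  classical
  rw [linearIndependent_iff']
  intro s g hsum
  by_contra! h
  obtain ⟨k₀, hk₀s, hk₀⟩ := h
  obtain ⟨k, hk, hmax⟩ :=
    (s.filter (g · ≠ 0)).exists_max_image p ⟨k₀, mem_filter.2 ⟨hk₀s, hk₀⟩⟩
  rw [mem_filter] at hk
  -- `p k` is maximal among the `p l` with `g l ≠ 0`, so at row `p k` only the term `l = k` survives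
  have hrow : ∑ l ∈ s, g l * v l (p k) = 0 := by simpa using congrFun hsum (p k)
  rw [sum_eq_single_of_mem k hk.1 ?_] at hrow
  · exact mul_ne_zero hk.2 (hne k) hrow
  intro l hl hlk
  by_cases hgl : g l = 0
  · simp [hgl]
  · have hlt : p l < p k := lt_of_le_of_ne (hmax l (mem_filter.2 ⟨hl, hgl⟩)) (hp.ne hlk)
    simp [hzero l _ hlt]

theorem Matrix.rank_eq_card_col_ne_zero {K m n : Type*} [CommRing K] [Nontrivial K]
    [StrongRankCondition K] [Fintype m] [Fintype n] (M : Matrix m n K)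
    (h : LinearIndependent K fun j : {j // M.col j ≠ 0} => M.col j) :
    M.rank = Nat.card {j // M.col j ≠ 0} := by
  classical
  have hrange : Set.range (fun j : {j // M.col j ≠ 0} => M.col j) = Set.range M.col \ {0} := by
    ext x
    simp only [Set.mem_range, Subtype.exists, exists_prop, Set.mem_sdiff, Set.mem_singleton_iff]
    constructor
    · rintro ⟨j, hj, rfl⟩
      exact ⟨⟨j, rfl⟩, hj⟩
    · rintro ⟨⟨j, rfl⟩, hj⟩
      exact ⟨j, hj, rfl⟩
  rw [M.rank_eq_finrank_span_cols, Nat.card_eq_fintype_card, ← finrank_span_eq_card h, hrange,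
    Submodule.span_sdiff_singleton_zero]

theorem Fin.card_filter_val_lt_succ {n : ℕ} (P : Fin n → Prop) [DecidablePred P] (j : Fin n) :
    #{k : Fin n | k.1 < j.1 + 1 ∧ P k} = #{k : Fin n | k.1 < j.1 ∧ P k} + if P j then 1 else 0 := by
  have hlt : ∀ k : Fin n, k.1 < j.1 + 1 ↔ k.1 < j.1 ∨ k = j := fun k => by omega
  split_ifs with hj
  · rw [← card_insert_of_notMem (s := filter (fun k : Fin n => k.1 < j.1 ∧ P k) univ) (a := j)
      (by simp)]
    congr 1
    ext k
    simp only [mem_insert, mem_filter, mem_univ, true_and, hlt]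
    grind
  · rw [add_zero]
    congr 1
    ext k
    simp only [mem_filter, mem_univ, true_and, hlt]
    grind

section Pivot

variable {m n : ℕ} {R : Matrix (Fin m) (Fin n) (ZMod 2)}

theorem pivot_eq_coe_iff {j : Fin n} {p : Fin m} :
    pivot R j = p ↔ R p j ≠ 0 ∧ ∀ i, p < i → R i j = 0 := by
  constructor
  · intro h
    refine ⟨by simpa using Finset.mem_of_max h, fun i hpi => ?_⟩
    by_contra hi
    have : (i : WithBot (Fin m)) ≤ p := h ▸ Finset.le_max (by simpa using hi)
    exact (WithBot.coe_le_coe.1 this).not_gt hpi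
  · rintro ⟨hp, habove⟩
    have hmem : p ∈ univ.filter (fun i => R i j ≠ 0) := by simpa using hp
    obtain ⟨q, hq⟩ := Finset.max_of_mem hmem
    have hqp : q ≤ p := not_lt.1 fun hpq => by
      simpa [habove q hpq] using Finset.mem_of_max hq
    have hpq : (p : WithBot (Fin m)) ≤ q := hq ▸ Finset.le_max hmem
    rw [pivot, hq, le_antisymm hqp (WithBot.coe_le_coe.1 hpq)]

theorem exists_pivot_eq_coe {i : Fin m} {j : Fin n} (h : R i j ≠ 0) :
    ∃ p : Fin m, pivot R j = p ∧ i ≤ p := by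
  obtain ⟨p, hp⟩ := Finset.max_of_mem (s := univ.filter (fun i => R i j ≠ 0)) (by simpa using h)
  refine ⟨p, hp, not_lt.1 fun hpi => h ?_⟩
  exact (pivot_eq_coe_iff.1 hp).2 i hpi

theorem pivot_eq_coe_iff_exists {i : Fin m} {j : Fin n} :
    pivot R j = i ↔
      (∃ r : Fin m, i.1 ≤ r.1 ∧ R r j ≠ 0) ∧ ¬∃ r : Fin m, i.1 + 1 ≤ r.1 ∧ R r j ≠ 0 := by
  rw [pivot_eq_coe_iff]
  constructor
  · rintro ⟨hi, habove⟩
    exact ⟨⟨i, le_rfl, hi⟩, fun ⟨r, hr, hrj⟩ => hrj (habove r (Fin.lt_def.2 hr))⟩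
  · rintro ⟨⟨r, hir, hrj⟩, hnone⟩
    have hri : r = i := Fin.ext (by by_contra h; exact hnone ⟨r, by omega, hrj⟩)
    exact ⟨hri ▸ hrj, fun r hir => not_not.1 fun hrj => hnone ⟨r, Fin.lt_def.1 hir, hrj⟩⟩

theorem Reduced.rank_lowerLeft (hred : Reduced R) (a b : ℕ) :
    (lowerLeft R a b).rank = #{k : Fin n | k.1 < b ∧ ∃ r : Fin m, a ≤ r.1 ∧ R r k ≠ 0} := by
  set M := lowerLeft R a b
  have hcol : ∀ k, M.col k ≠ 0 ↔ ∃ r : Fin m, a ≤ r.1 ∧ R r k ≠ 0 := by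
    intro k
    rw [Ne, funext_iff.not, not_forall]
    exact ⟨fun ⟨r, hr⟩ => ⟨r.1, r.2, hr⟩, fun ⟨r, har, hr⟩ => ⟨⟨r, har⟩, hr⟩⟩
  have hpivot : ∀ k : {k // M.col k ≠ 0}, ∃ p : {r : Fin m // a ≤ r.1}, pivot R k.1.1 = p.1 := by
    intro k
    obtain ⟨r, har, hr⟩ := (hcol k.1).1 k.2
    obtain ⟨p, hp, hrp⟩ := exists_pivot_eq_coe hr
    exact ⟨⟨p, har.trans hrp⟩, hp⟩
  choose p hp using hpivot
  have hcolR : ∀ k : {k // M.col k ≠ 0}, (fun r => R r k.1.1) ≠ 0 := fun k h =>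
    (pivot_eq_coe_iff.1 (hp k)).1 (congrFun h _)
  have hli : LinearIndependent (ZMod 2) fun k : {k // M.col k ≠ 0} => M.col k := by
    refine linearIndependent_of_injective_lastNonzero p (fun k l hkl => ?_)
      (fun k => (pivot_eq_coe_iff.1 (hp k)).1) (fun k r hr => (pivot_eq_coe_iff.1 (hp k)).2 r hr)
    by_contra hne
    exact hred k.1.1 l.1.1 (fun h => hne (Subtype.ext (Subtype.ext h))) (hcolR k) (hcolR l)
      (by rw [hp, hp, hkl])
  rw [M.rank_eq_card_col_ne_zero hli, Nat.card_congr ((Equiv.subtypeEquivRight hcol).trans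
    (Equiv.subtypeSubtypeEquivSubtypeInter (fun k : Fin n => k.1 < b) fun k =>
      ∃ r : Fin m, a ≤ r.1 ∧ R r k ≠ 0)), Nat.card_eq_fintype_card, Fintype.card_subtype]

end Pivot

section Triangular

variable {m n : ℕ} {D : Matrix (Fin m) (Fin n) (ZMod 2)} {W : Matrix (Fin n) (Fin n) (ZMod 2)}

theorem lowerLeft_mul_of_blockTriangular (hW : W.BlockTriangular id) (a b : ℕ) :
    lowerLeft (D * W) a b =
      lowerLeft D a b * W.submatrix (Subtype.val : {k : Fin n // k.1 < b} → Fin n) Subtype.val := by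
  ext i j
  simp only [lowerLeft, Matrix.mul_apply, Matrix.submatrix_apply]
  rw [← Fintype.sum_subtype_add_sum_subtype (fun k : Fin n => k.1 < b), add_eq_left]
  refine Finset.sum_eq_zero fun k _ => ?_
  rw [hW (show j.1 < k.1 from Fin.lt_def.2 (j.2.trans_le (not_lt.1 k.2))), mul_zero]

theorem rLL_mul_of_isUnit_of_blockTriangular (hW : IsUnit W) (hWt : W.BlockTriangular id)
    (a b : ℕ) : rLL (D * W) a b = rLL D a b := by
  have : Invertible W := hW.invertible
  have hWinv : D * W * W⁻¹ = D := by simp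
  have hWinvt := Matrix.blockTriangular_inv_of_blockTriangular hWt
  refine le_antisymm ?_ ?_
  · rw [rLL, lowerLeft_mul_of_blockTriangular hWt]
    exact Matrix.rank_mul_le_left _ _
  · conv_lhs => rw [rLL, ← hWinv, lowerLeft_mul_of_blockTriangular hWinvt]
    exact Matrix.rank_mul_le_left _ _

end Triangular

-- With 0-based indices, the paper's `D_i^j` (rows `≥ i`, columns `≤ j`) is `lowerLeft D i (j + 1)`.
/-- pairing lemma of Cohen-Steiner–Edelsbrunner–Morozov: for
any reduction `R = D·V` (with `V` invertible upper-triangular and `R`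
reduced), the pivot of column `j` of `R` is row `i` if and only if
`rank(D_i^j) − rank(D_{i+1}^j) − rank(D_i^{j−1}) + rank(D_{i+1}^{j−1}) = 1`,
where `D_a^b` is the lower-left submatrix of `D` with rows `≥ a` and columns
`≤ b`.  (With 0-based indices `i : Fin m`, `j : Fin n`, the submatrix of rows
`≥ i` and columns `≤ j` is `lowerLeft D i (j+1)`.) -/
theorem pairing_lemma_ranks {m n : ℕ}
    (D R : Matrix (Fin m) (Fin n) (ZMod 2))
    (V : Matrix (Fin n) (Fin n) (ZMod 2))
    (hV : IsUnit V) (hVt : V.BlockTriangular id)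
    (hR : R = D * V) (hred : Reduced R) :
    ∀ i : Fin m, ∀ j : Fin n,
      pivot R j = (i : WithBot (Fin m)) ↔
        (rLL D i.1 (j.1 + 1) : ℤ) - rLL D (i.1 + 1) (j.1 + 1)
          - rLL D i.1 j.1 + rLL D (i.1 + 1) j.1 = 1 := by
  intro i j
  have hrank (a b : ℕ) :
      rLL D a b = #{k : Fin n | k.1 < b ∧ ∃ r : Fin m, a ≤ r.1 ∧ R r k ≠ 0} := by
    rw [← rLL_mul_of_isUnit_of_blockTriangular hV hVt, ← hR]
    exact hred.rank_lowerLeft a b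
  simp only [hrank, Fin.card_filter_val_lt_succ, pivot_eq_coe_iff_exists]
  push_cast
  split_ifs with hi hi₁ hi₁ <;>
    simp only [hi, hi₁, not_true_eq_false, not_false_eq_true, and_false, and_true, true_iff,
      false_iff] <;>
    omega
end

section
/- Interval modules are indecomposable: for any interval I in the finite totally ordered set {1,…,n}, the interval persistence module χ_I (which is the ground field on indices in I with identity structure maps, and 0 elsewhere) cannot be written as a direct sum of two nonzero persistence submodules. -/
open Classical

universe u v

/-- A persistence module over the index set `Fin n` (representing `{1,…,n}`),
valued in vector spaces over a field `K`. -/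
structure PMod (K : Type u) [Field K] (n : ℕ) where
  V : Fin n → Type v
  [acg : ∀ i, AddCommGroup (V i)]
  [mod : ∀ i, Module K (V i)]
  map : ∀ i j : Fin n, i ≤ j → (V i →ₗ[K] V j)
  map_id : ∀ i, map i i le_rfl = LinearMap.id
  map_comp : ∀ i j k : Fin n, ∀ (hij : i ≤ j) (hjk : j ≤ k),
    (map j k hjk).comp (map i j hij) = map i k (hij.trans hjk)

attribute [instance] PMod.acg PMod.mod

/-- The spaces of the interval module `χ_I`: the ground field (as the full
submodule `⊤` of `K`) on indices in `I`, and `0` elsewhere. -/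
noncomputable def chiV (K : Type*) [Field K] {n : ℕ} (I : Set (Fin n))
    (i : Fin n) : Submodule K K :=
  if i ∈ I then ⊤ else ⊥

/-- The structure maps of the interval module `χ_I`: the identity whenever
both indices lie in `I`, and zero otherwise. -/
noncomputable def chiMap (K : Type*) [Field K] {n : ℕ} (I : Set (Fin n))
    (i j : Fin n) : (chiV K I i) →ₗ[K] (chiV K I j) where
  toFun x := ⟨if i ∈ I ∧ j ∈ I then (x : K) else 0, by
    by_cases hc : i ∈ I ∧ j ∈ I
    · simp [chiV, hc.2, if_pos hc]
    · simp [if_neg hc]⟩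
  map_add' x y := by
    apply Subtype.ext
    by_cases hc : i ∈ I ∧ j ∈ I <;> simp [hc]
  map_smul' c x := by
    apply Subtype.ext
    by_cases hc : i ∈ I ∧ j ∈ I <;> simp [hc]

/-- The interval persistence module `χ_I` for an interval `I` in `{1,…,n}`. -/
noncomputable def chi (K : Type*) [Field K] {n : ℕ} (I : Set (Fin n))
    (hI : ∀ i j k : Fin n, i ≤ j → j ≤ k → i ∈ I → k ∈ I → j ∈ I) :
    PMod K n where
  V i := chiV K I i
  map i j _ := chiMap K I i j
  map_id i := by
    apply LinearMap.ext; intro x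
    apply Subtype.ext
    by_cases hi : i ∈ I
    · simp [chiMap, hi]
    · have hx : (x : K) = 0 := by
        have h2 : (x : K) ∈ chiV K I i := x.2
        have hc : chiV K I i = ⊥ := if_neg hi
        have key : ∀ y : K, y ∈ chiV K I i → y = 0 := by
          intro y hy
          rw [hc] at hy
          exact (Submodule.mem_bot K).mp hy
        exact key _ h2
      simp [chiMap, hi, hx]
  map_comp i j k hij hjk := by
    apply LinearMap.ext; intro x
    apply Subtype.ext
    by_cases hik : i ∈ I ∧ k ∈ I
    · have hj : j ∈ I := hI i j k hij hjk hik.1 hik.2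
      simp [chiMap, hik.1, hik.2, hj]
    · by_cases hi : i ∈ I
      · by_cases hk : k ∈ I
        · exact absurd ⟨hi, hk⟩ hik
        · simp [chiMap, hk]
      · simp [chiMap, hi]

/-! Every space of `χ_I` is a subspace of `K`, so each `A i`, `B i` is `⊥` or `⊤`. Inside `I` the
structure maps are injective, so if `A i ≠ ⊥` and `i ≤ j ∈ I` then `A j ≠ ⊥`; this clashes with
`B j = ⊤` and `A j ⊓ B j = ⊥`. -/

open Module

theorem Submodule.eq_bot_or_eq_top_of_finrank_le_one {K V : Type*} [DivisionRing K]
    [AddCommGroup V] [Module K V] [FiniteDimensional K V] (h : finrank K V ≤ 1)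
    (S : Submodule K V) : S = ⊥ ∨ S = ⊤ := by
  have hS : finrank K S ≤ finrank K V := S.finrank_le
  rcases Nat.le_one_iff_eq_zero_or_eq_one.mp (hS.trans h) with hS0 | hS1
  · exact .inl (Submodule.finrank_eq_zero.mp hS0)
  · exact .inr (Submodule.eq_top_of_finrank_eq (by omega))

section PMod

variable {K : Type*} [Field K] {n : ℕ}

theorem PMod.ne_bot_of_le_of_injective (P : PMod K n) {S : ∀ i, Submodule K (P.V i)}
    (hS : ∀ i j : Fin n, ∀ h : i ≤ j, ∀ x ∈ S i, P.map i j h x ∈ S j)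
    {i j : Fin n} (hij : i ≤ j) (hinj : Function.Injective (P.map i j hij))
    (hi : S i ≠ ⊥) : S j ≠ ⊥ := by
  obtain ⟨x, hxS, hx0⟩ := Submodule.exists_mem_ne_zero_of_ne_bot hi
  exact Submodule.ne_bot_iff _ |>.mpr
    ⟨_, hS i j hij x hxS, (map_ne_zero_iff _ hinj).mpr hx0⟩

end PMod

section Chi

variable {K : Type*} [Field K] {n : ℕ} {I : Set (Fin n)}
  {hI : ∀ i j k : Fin n, i ≤ j → j ≤ k → i ∈ I → k ∈ I → j ∈ I}

theorem chi_submodule_eq_bot_or_eq_top {i : Fin n} (S : Submodule K ((chi K I hI).V i)) :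
    S = ⊥ ∨ S = ⊤ :=
  S.eq_bot_or_eq_top_of_finrank_le_one <|
    (Submodule.finrank_le (chiV K I i)).trans (finrank_self K).le

theorem mem_of_chi_submodule_ne_bot {i : Fin n} {S : Submodule K ((chi K I hI).V i)}
    (hS : S ≠ ⊥) : i ∈ I := by
  by_contra hi
  have : Subsingleton ((chi K I hI).V i) := by
    change Subsingleton (chiV K I i)
    rw [chiV, if_neg hi]
    infer_instance
  exact hS (Subsingleton.elim _ _)

theorem chi_map_injective {i j : Fin n} (hi : i ∈ I) (hj : j ∈ I) (hij : i ≤ j) :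
    Function.Injective ((chi K I hI).map i j hij) := fun x y hxy => by
  have := congrArg Subtype.val hxy
  simp only [chi, chiMap, hi, hj, and_self, if_true] at this
  exact Subtype.ext this

theorem chi_eq_bot_of_le_of_ne_bot {A B : ∀ i : Fin n, Submodule K ((chi K I hI).V i)}
    (hAinv : ∀ i j : Fin n, ∀ h : i ≤ j, ∀ x ∈ A i, (chi K I hI).map i j h x ∈ A j)
    (hinf : ∀ i, A i ⊓ B i = ⊥) {i j : Fin n} (hij : i ≤ j) (hA : A i ≠ ⊥) : B j = ⊥ := by
  by_contra hB
  have hAj : A j ≠ ⊥ := (chi K I hI).ne_bot_of_le_of_injective hAinv hij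
    (chi_map_injective (mem_of_chi_submodule_ne_bot hA) (mem_of_chi_submodule_ne_bot hB) hij) hA
  have hBj : B j = ⊤ := (chi_submodule_eq_bot_or_eq_top (B j)).resolve_left hB
  exact hAj (by simpa [hBj] using hinf j)

end Chi

theorem interval_module_indecomposable_general (K : Type*) [Field K] {n : ℕ}
    (I : Set (Fin n))
    (hI : ∀ i j k : Fin n, i ≤ j → j ≤ k → i ∈ I → k ∈ I → j ∈ I)
    (A B : ∀ i : Fin n, Submodule K ((chi K I hI).V i))
    (hAinv : ∀ i j : Fin n, ∀ h : i ≤ j, ∀ x ∈ A i, (chi K I hI).map i j h x ∈ A j)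
    (hBinv : ∀ i j : Fin n, ∀ h : i ≤ j, ∀ x ∈ B i, (chi K I hI).map i j h x ∈ B j)
    (hinf : ∀ i, A i ⊓ B i = ⊥) :
    (∀ i, A i = ⊥) ∨ (∀ i, B i = ⊥) := by
  by_contra! ⟨⟨i, hA⟩, ⟨j, hB⟩⟩
  rcases le_total i j with hij | hji
  · exact hB (chi_eq_bot_of_le_of_ne_bot hAinv hinf hij hA)
  · exact hA (chi_eq_bot_of_le_of_ne_bot hBinv (fun k => inf_comm (A k) (B k) ▸ hinf k) hji hB)

/-- interval modules are indecomposable: for any nonempty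
interval `I` in the finite totally ordered set `{1,…,n}`, the interval module
`χ_I` cannot be written as a direct sum of two nonzero persistence
submodules.  A decomposition `χ_I ≅ A ⊕ B` is given by families of submodules
`A i, B i` of the spaces of `χ_I` that are invariant under the structure maps
and are complementary (`A i ⊓ B i = ⊥` and `A i ⊔ B i = ⊤`) at every index;
the conclusion is that one of the two summands is zero. -/
theorem interval_module_indecomposable (K : Type*) [Field K] {n : ℕ}
    (I : Set (Fin n)) (hne : I.Nonempty)
    (hI : ∀ i j k : Fin n, i ≤ j → j ≤ k → i ∈ I → k ∈ I → j ∈ I)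
    (A B : ∀ i : Fin n, Submodule K ((chi K I hI).V i))
    (hAinv : ∀ i j : Fin n, ∀ h : i ≤ j, ∀ x ∈ A i, (chi K I hI).map i j h x ∈ A j)
    (hBinv : ∀ i j : Fin n, ∀ h : i ≤ j, ∀ x ∈ B i, (chi K I hI).map i j h x ∈ B j)
    (hinf : ∀ i, A i ⊓ B i = ⊥) (hsup : ∀ i, A i ⊔ B i = ⊤) :
    (∀ i, A i = ⊥) ∨ (∀ i, B i = ⊥) :=
  interval_module_indecomposable_general K I hI A B hAinv hBinv hinf
end
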